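/- Let 0 < ε < 1/2 and β ∈ [0,1], and consider the construction of the previous statement: over the noiseless-feedback rewrite channel with crossover ε, X₁ ~ Bern(α); U = 0 if Y₁ = X₁ or X₁ = 0 and otherwise U ~ Bern(β); X₂ = no-rewrite if Y₁ = X₁ or U = 1, and X₂ = X₁ otherwise. If α = (ε − ε²)/(1 − 2ε² − β(ε − ε²)), then α ∈ [0,1], P(Y₂ = 1) = ε, and I(U, X₁; Y₂) − I(U; Y₁ | X₁) = (1−α)·[h_b(ε) − h_b(ε²)] + α(1−βε)·[h_b((1−β)ε/(1−βε)) − h_b((1−β)ε²/(1−βε))]. -/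

import Mathlib

set_option maxHeartbeats 2000000


open Classical

noncomputable def pOf {Ω α : Type*} [Fintype Ω] (μ : Ω → ℝ) (X : Ω → α) (x : α) : ℝ :=
  ∑ ω, if X ω = x then μ ω else 0

noncomputable def pr {Ω : Type*} [Fintype Ω] (μ : Ω → ℝ) (E : Ω → Prop) : ℝ :=
  ∑ ω, if E ω then μ ω else 0

noncomputable def KL {α : Type*} [Fintype α] (p q : α → ℝ) : ℝ :=
  ∑ x, p x * Real.logb 2 (p x / q x)

noncomputable def TV {α : Type*} [Fintype α] (p q : α → ℝ) : ℝ :=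
  (∑ x, |p x - q x|) / 2

noncomputable def Hent {Ω α : Type*} [Fintype Ω] [Fintype α] (μ : Ω → ℝ) (X : Ω → α) : ℝ :=
  -∑ x, pOf μ X x * Real.logb 2 (pOf μ X x)

noncomputable def condH {Ω α β : Type*} [Fintype Ω] [Fintype α] [Fintype β]
    (μ : Ω → ℝ) (X : Ω → α) (Y : Ω → β) : ℝ :=
  Hent μ (fun ω => (X ω, Y ω)) - Hent μ Y

noncomputable def Iinfo {Ω α β : Type*} [Fintype Ω] [Fintype α] [Fintype β]
    (μ : Ω → ℝ) (X : Ω → α) (Y : Ω → β) : ℝ :=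
  Hent μ X + Hent μ Y - Hent μ (fun ω => (X ω, Y ω))

noncomputable def hb (p : ℝ) : ℝ :=
  -(p * Real.logb 2 p) - (1 - p) * Real.logb 2 (1 - p)

noncomputable def bern (p : ℝ) : Bool → ℝ := fun b => if b then p else 1 - p

/-- In the scheme of Statement 8 (noiseless-feedback rewrite channel,
`0 < ε < 1/2`, `β ∈ [0,1]`), the choice `α = (ε−ε²)/(1−2ε²−β(ε−ε²))` satisfies
`α ∈ [0,1]`, yields `P(Y₂=1) = ε`, and gives
`I(U,X₁;Y₂) − I(U;Y₁|X₁) = (1−α)[h_b(ε)−h_b(ε²)]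
  + α(1−βε)[h_b((1−β)ε/(1−βε)) − h_b((1−β)ε²/(1−βε))]`,
where `I(U;Y₁|X₁) = H(Y₁|X₁) − H(Y₁|U,X₁)`. -/
theorem stmt9 (ε α β : ℝ) (hε0 : 0 < ε) (hε1 : ε < 1 / 2)
    (hβ0 : 0 ≤ β) (hβ1 : β ≤ 1)
    (hα : α = (ε - ε ^ 2) / (1 - 2 * ε ^ 2 - β * (ε - ε ^ 2))) :
    let μ : Bool × Bool × Bool × Bool → ℝ :=
      fun ω => bern α ω.1 * bern ε ω.2.1 * bern β ω.2.2.1 * bern ε ω.2.2.2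
    let X1 : Bool × Bool × Bool × Bool → Bool := fun ω => ω.1
    let Y1 : Bool × Bool × Bool × Bool → Bool := fun ω => Bool.xor (X1 ω) ω.2.1
    let U : Bool × Bool × Bool × Bool → Bool :=
      fun ω => if Y1 ω = X1 ω ∨ X1 ω = false then false else ω.2.2.1
    let X2 : Bool × Bool × Bool × Bool → Option Bool :=
      fun ω => if Y1 ω = X1 ω ∨ U ω = true then none else some (X1 ω)
    let Y2 : Bool × Bool × Bool × Bool → Bool :=
      fun ω => match X2 ω with
        | none => Y1 ω
        | some b => Bool.xor b ω.2.2.2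
    (0 ≤ α ∧ α ≤ 1)
    ∧ pr μ (fun ω => Y2 ω = true) = ε
    ∧ Iinfo μ (fun ω => (U ω, X1 ω)) Y2
        - (condH μ Y1 X1 - condH μ Y1 (fun ω => (U ω, X1 ω)))
      = (1 - α) * (hb ε - hb (ε ^ 2))
        + α * (1 - β * ε)
          * (hb ((1 - β) * ε / (1 - β * ε)) - hb ((1 - β) * ε ^ 2 / (1 - β * ε))) := by
  intro μ X1 Y1 U X2 Y2
  have h1ε : (0:ℝ) < 1 - ε := by linarith
  have hD : (0:ℝ) < 1 - 2 * ε ^ 2 - β * (ε - ε ^ 2) := by nlinarith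
  have hα0 : 0 < α := by
    rw [hα]; exact div_pos (by nlinarith) hD
  have hα1 : α < 1 := by
    rw [hα, div_lt_one hD]; nlinarith
  have hβε : (0:ℝ) < 1 - β * ε := by nlinarith
  have hk : (0:ℝ) < 1 + ε - β * ε := by nlinarith
  have h1e2 : (0:ℝ) < 1 - ε ^ 2 := by nlinarith
  have a1 : pOf μ Y2 true = ε := by
    simp only [pOf, μ, Y2, X2, U, Y1, X1, bern, Fintype.sum_prod_type, Fintype.sum_bool]
    try norm_num
    have key : α * (1 - 2 * ε ^ 2 - β * (ε - ε ^ 2)) = ε - ε ^ 2 := by rw [hα, div_mul_cancel₀ _ hD.ne']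
    linear_combination key
  have a2 : pOf μ Y2 false = 1 - ε := by
    simp only [pOf, μ, Y2, X2, U, Y1, X1, bern, Fintype.sum_prod_type, Fintype.sum_bool]
    try norm_num
    have key : α * (1 - 2 * ε ^ 2 - β * (ε - ε ^ 2)) = ε - ε ^ 2 := by rw [hα, div_mul_cancel₀ _ hD.ne']
    linear_combination (-1 : ℝ) * key
  have b1 : pOf μ X1 true = α := by
    simp only [pOf, μ, Y2, X2, U, Y1, X1, bern, Fintype.sum_prod_type, Fintype.sum_bool]
    try norm_num
    try ring
  have b2 : pOf μ X1 false = 1 - α := by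
    simp only [pOf, μ, Y2, X2, U, Y1, X1, bern, Fintype.sum_prod_type, Fintype.sum_bool]
    try norm_num
    try ring
  have c1 : pOf μ (fun ω => (U ω, X1 ω)) (true, true) = α * (β * ε) := by
    simp only [pOf, μ, Y2, X2, U, Y1, X1, bern, Fintype.sum_prod_type, Fintype.sum_bool]
    try norm_num
    try ring
  have c2 : pOf μ (fun ω => (U ω, X1 ω)) (true, false) = 0 := by
    simp only [pOf, μ, Y2, X2, U, Y1, X1, bern, Fintype.sum_prod_type, Fintype.sum_bool]
    try norm_num
    try ring
  have c3 : pOf μ (fun ω => (U ω, X1 ω)) (false, true) = α * (1 - β * ε) := by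
    simp only [pOf, μ, Y2, X2, U, Y1, X1, bern, Fintype.sum_prod_type, Fintype.sum_bool]
    try norm_num
    try ring
  have c4 : pOf μ (fun ω => (U ω, X1 ω)) (false, false) = 1 - α := by
    simp only [pOf, μ, Y2, X2, U, Y1, X1, bern, Fintype.sum_prod_type, Fintype.sum_bool]
    try norm_num
    try ring
  have d1 : pOf μ (fun ω => (Y1 ω, X1 ω)) (true, true) = α * (1 - ε) := by
    simp only [pOf, μ, Y2, X2, U, Y1, X1, bern, Fintype.sum_prod_type, Fintype.sum_bool]
    try norm_num
    try ring
  have d2 : pOf μ (fun ω => (Y1 ω, X1 ω)) (true, false) = (1 - α) * ε := by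
    simp only [pOf, μ, Y2, X2, U, Y1, X1, bern, Fintype.sum_prod_type, Fintype.sum_bool]
    try norm_num
    try ring
  have d3 : pOf μ (fun ω => (Y1 ω, X1 ω)) (false, true) = α * ε := by
    simp only [pOf, μ, Y2, X2, U, Y1, X1, bern, Fintype.sum_prod_type, Fintype.sum_bool]
    try norm_num
    try ring
  have d4 : pOf μ (fun ω => (Y1 ω, X1 ω)) (false, false) = (1 - α) * (1 - ε) := by
    simp only [pOf, μ, Y2, X2, U, Y1, X1, bern, Fintype.sum_prod_type, Fintype.sum_bool]
    try norm_num
    try ring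
  have e0 : pOf μ (fun ω => (Y1 ω, U ω, X1 ω)) (true, true, true) = 0 := by
    simp only [pOf, μ, Y2, X2, U, Y1, X1, bern, Fintype.sum_prod_type, Fintype.sum_bool]
    try norm_num
    try ring
  have e1 : pOf μ (fun ω => (Y1 ω, U ω, X1 ω)) (true, true, false) = 0 := by
    simp only [pOf, μ, Y2, X2, U, Y1, X1, bern, Fintype.sum_prod_type, Fintype.sum_bool]
    try norm_num
    try ring
  have e2 : pOf μ (fun ω => (Y1 ω, U ω, X1 ω)) (true, false, true) = α * (1 - ε) := by
    simp only [pOf, μ, Y2, X2, U, Y1, X1, bern, Fintype.sum_prod_type, Fintype.sum_bool]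
    try norm_num
    try ring
  have e3 : pOf μ (fun ω => (Y1 ω, U ω, X1 ω)) (true, false, false) = (1 - α) * ε := by
    simp only [pOf, μ, Y2, X2, U, Y1, X1, bern, Fintype.sum_prod_type, Fintype.sum_bool]
    try norm_num
    try ring
  have e4 : pOf μ (fun ω => (Y1 ω, U ω, X1 ω)) (false, true, true) = α * (β * ε) := by
    simp only [pOf, μ, Y2, X2, U, Y1, X1, bern, Fintype.sum_prod_type, Fintype.sum_bool]
    try norm_num
    try ring
  have e5 : pOf μ (fun ω => (Y1 ω, U ω, X1 ω)) (false, true, false) = 0 := by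
    simp only [pOf, μ, Y2, X2, U, Y1, X1, bern, Fintype.sum_prod_type, Fintype.sum_bool]
    try norm_num
    try ring
  have e6 : pOf μ (fun ω => (Y1 ω, U ω, X1 ω)) (false, false, true) = α * ((1 - β) * ε) := by
    simp only [pOf, μ, Y2, X2, U, Y1, X1, bern, Fintype.sum_prod_type, Fintype.sum_bool]
    try norm_num
    try ring
  have e7 : pOf μ (fun ω => (Y1 ω, U ω, X1 ω)) (false, false, false) = (1 - α) * (1 - ε) := by
    simp only [pOf, μ, Y2, X2, U, Y1, X1, bern, Fintype.sum_prod_type, Fintype.sum_bool]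
    try norm_num
    try ring
  have f0 : pOf μ (fun ω => ((U ω, X1 ω), Y2 ω)) ((true, true), true) = 0 := by
    simp only [pOf, μ, Y2, X2, U, Y1, X1, bern, Fintype.sum_prod_type, Fintype.sum_bool]
    try norm_num
    try ring
  have f1 : pOf μ (fun ω => ((U ω, X1 ω), Y2 ω)) ((true, true), false) = α * (β * ε) := by
    simp only [pOf, μ, Y2, X2, U, Y1, X1, bern, Fintype.sum_prod_type, Fintype.sum_bool]
    try norm_num
    try ring
  have f2 : pOf μ (fun ω => ((U ω, X1 ω), Y2 ω)) ((true, false), true) = 0 := by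
    simp only [pOf, μ, Y2, X2, U, Y1, X1, bern, Fintype.sum_prod_type, Fintype.sum_bool]
    try norm_num
    try ring
  have f3 : pOf μ (fun ω => ((U ω, X1 ω), Y2 ω)) ((true, false), false) = 0 := by
    simp only [pOf, μ, Y2, X2, U, Y1, X1, bern, Fintype.sum_prod_type, Fintype.sum_bool]
    try norm_num
    try ring
  have f4 : pOf μ (fun ω => ((U ω, X1 ω), Y2 ω)) ((false, true), true) = α * ((1 - ε) * (1 + ε - β * ε)) := by
    simp only [pOf, μ, Y2, X2, U, Y1, X1, bern, Fintype.sum_prod_type, Fintype.sum_bool]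
    try norm_num
    try ring
  have f5 : pOf μ (fun ω => ((U ω, X1 ω), Y2 ω)) ((false, true), false) = α * ((1 - β) * ε ^ 2) := by
    simp only [pOf, μ, Y2, X2, U, Y1, X1, bern, Fintype.sum_prod_type, Fintype.sum_bool]
    try norm_num
    try ring
  have f6 : pOf μ (fun ω => ((U ω, X1 ω), Y2 ω)) ((false, false), true) = (1 - α) * ε ^ 2 := by
    simp only [pOf, μ, Y2, X2, U, Y1, X1, bern, Fintype.sum_prod_type, Fintype.sum_bool]
    try norm_num
    try ring
  have f7 : pOf μ (fun ω => ((U ω, X1 ω), Y2 ω)) ((false, false), false) = (1 - α) * (1 - ε ^ 2) := by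
    simp only [pOf, μ, Y2, X2, U, Y1, X1, bern, Fintype.sum_prod_type, Fintype.sum_bool]
    try norm_num
    try ring
  refine ⟨⟨le_of_lt hα0, le_of_lt hα1⟩, ?_, ?_⟩
  · have : pr μ (fun ω => Y2 ω = true) = pOf μ Y2 true := by
      simp only [pr, pOf]
    rw [this, a1]
  · simp only [Iinfo, condH, Hent, Fintype.sum_prod_type, Fintype.sum_bool]
    rw [a1, a2, b1, b2, c1, c2, c3, c4, d1, d2, d3, d4,
      e0, e1, e2, e3, e4, e5, e6, e7, f0, f1, f2, f3, f4, f5, f6, f7]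
    simp only [hb]
    rw [show (1:ℝ) - (1 - β) * ε / (1 - β * ε) = (1 - ε) / (1 - β * ε) by
          field_simp; ring,
        show (1:ℝ) - (1 - β) * ε ^ 2 / (1 - β * ε) = (1 - ε) * (1 + ε - β * ε) / (1 - β * ε) by
          field_simp; ring]
    have hαne : α ≠ 0 := hα0.ne'
    have h1αne : (1:ℝ) - α ≠ 0 := by linarith
    have hεne : ε ≠ 0 := hε0.ne'
    have h1εne : (1:ℝ) - ε ≠ 0 := h1ε.ne'
    have hε2ne : ε ^ 2 ≠ 0 := pow_ne_zero 2 hεne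
    have h1ε2ne : (1:ℝ) - ε ^ 2 ≠ 0 := h1e2.ne'
    have hβεne : (1:ℝ) - β * ε ≠ 0 := hβε.ne'
    have hkne : (1:ℝ) + ε - β * ε ≠ 0 := hk.ne'
    rcases eq_or_lt_of_le hβ1 with rfl | hβlt
    · norm_num
      rw [Real.logb_mul hαne h1εne, Real.logb_mul hαne hεne,
          Real.logb_mul h1αne h1ε2ne, Real.logb_mul h1αne hε2ne]
      ring
    · have hβ' : (1:ℝ) - β ≠ 0 := by linarith
      have n1 : (1 - β) * ε ≠ 0 := mul_ne_zero hβ' hεne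
      have n2 : (1 - β) * ε ^ 2 ≠ 0 := mul_ne_zero hβ' hε2ne
      have n3 : (1 - ε) * (1 + ε - β * ε) ≠ 0 := mul_ne_zero h1εne hkne
      rw [Real.logb_div n1 hβεne,
          Real.logb_div h1εne hβεne,
          Real.logb_div n2 hβεne,
          Real.logb_div n3 hβεne,
          Real.logb_mul hαne n3,
          Real.logb_mul hαne n2,
          Real.logb_mul hαne n1,
          Real.logb_mul hβ' hεne, Real.logb_mul hβ' hε2ne,
          Real.logb_mul h1εne hkne,
          Real.logb_mul hαne hβεne,
          Real.logb_mul hαne h1εne, Real.logb_mul hαne hεne,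
          Real.logb_mul h1αne h1ε2ne, Real.logb_mul h1αne hε2ne,
          Real.logb_mul h1αne h1εne, Real.logb_mul h1αne hεne]
      field_simp
      ring
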